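/- Let π be an unsigned permutation of size n with b_τ(π) transposition breakpoints, let π' be the unsigned permutation of size 2n defined by π'_{2i−1} = 2π_i − 1 and π'_{2i} = 2π_i for 1 ≤ i ≤ n, and let w_ρ, w_τ be positive weights with w_τ/w_ρ ≤ 3/2. Then there exists a sequence S of transpositions transforming π into ι^n with 3·|S| = b_τ(π) if and only if 3·d^w_{M6}(π') ≤ w_τ · b_τ(π), where M6 = {reversals, transpositions, inverse transpositions, revrevs} acts on unsigned permutations of size 2n. -/

import Mathlib

/-- The four kinds of rearrangement operations considered:
reversals, transpositions, inverse transpositions and revrevs. -/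
inductive RearrOp : Type
  | rev
  | transp
  | invtransp
  | revrev
deriving DecidableEq

/-- `π` is (the extended version of) a signed permutation of size `n`:
`π 0 = +0`, `π (n+1) = +(n+1)`, and on positions `1, …, n` the values have pairwise
distinct absolute values lying in `{1, …, n}`. -/
def IsSPerm (n : ℕ) (π : ℕ → ℤ) : Prop :=
  π 0 = 0 ∧ π (n + 1) = (n : ℤ) + 1 ∧
  (∀ i : ℕ, 1 ≤ i → i ≤ n → 1 ≤ |π i| ∧ |π i| ≤ (n : ℤ)) ∧
  (∀ i j : ℕ, 1 ≤ i → i ≤ n → 1 ≤ j → j ≤ n → |π i| = |π j| → i = j)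

/-- `π` is (the extended version of) an unsigned permutation of size `n`. -/
def IsUPerm (n : ℕ) (π : ℕ → ℕ) : Prop :=
  π 0 = 0 ∧ π (n + 1) = n + 1 ∧
  (∀ i : ℕ, 1 ≤ i → i ≤ n → 1 ≤ π i ∧ π i ≤ n) ∧
  (∀ i j : ℕ, 1 ≤ i → i ≤ n → 1 ≤ j → j ≤ n → π i = π j → i = j)

/-- Signed reversal `ρ(i,j)`, `1 ≤ i ≤ j ≤ n`: replaces `(π_i … π_j)` by `(−π_j … −π_i)`. -/
def SRev (n : ℕ) (π π' : ℕ → ℤ) : Prop :=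
  ∃ i j : ℕ, 1 ≤ i ∧ i ≤ j ∧ j ≤ n ∧
    (∀ p : ℕ, i ≤ p → p ≤ j → π' p = - π (i + j - p)) ∧
    (∀ p : ℕ, p < i ∨ j < p → π' p = π p)

/-- Transposition `τ(i,j,k)`, `1 ≤ i < j < k ≤ n+1`: exchanges the adjacent segments
`(π_i … π_{j−1})` and `(π_j … π_{k−1})`. -/
def STransp (n : ℕ) (π π' : ℕ → ℤ) : Prop :=
  ∃ i j k : ℕ, 1 ≤ i ∧ i < j ∧ j < k ∧ k ≤ n + 1 ∧
    (∀ p : ℕ, i ≤ p → p < i + (k - j) → π' p = π (p + (j - i))) ∧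
    (∀ p : ℕ, i + (k - j) ≤ p → p < k → π' p = π (p - (k - j))) ∧
    (∀ p : ℕ, p < i ∨ k ≤ p → π' p = π p)

/-- Signed inverse transposition (type 1 or type 2): exchanges the two adjacent segments
`(π_i … π_{j−1})` and `(π_j … π_{k−1})` and additionally reverses (and negates) one of them. -/
def SInvTransp (n : ℕ) (π π' : ℕ → ℤ) : Prop :=
  ∃ i j k : ℕ, 1 ≤ i ∧ i < j ∧ j < k ∧ k ≤ n + 1 ∧
    (((∀ p : ℕ, i ≤ p → p < i + (k - j) → π' p = π (p + (j - i))) ∧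
      (∀ p : ℕ, i + (k - j) ≤ p → p < k → π' p = - π (i + k - 1 - p))) ∨
     ((∀ p : ℕ, i ≤ p → p < i + (k - j) → π' p = - π (i + k - 1 - p)) ∧
      (∀ p : ℕ, i + (k - j) ≤ p → p < k → π' p = π (p - (k - j))))) ∧
    (∀ p : ℕ, p < i ∨ k ≤ p → π' p = π p)

/-- Signed revrev `ρρ(i,j,k)`: reverses (and negates) each of the two adjacent segments
`(π_i … π_{j−1})` and `(π_j … π_{k−1})` in place, without exchanging them. -/
def SRevRev (n : ℕ) (π π' : ℕ → ℤ) : Prop :=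
  ∃ i j k : ℕ, 1 ≤ i ∧ i < j ∧ j < k ∧ k ≤ n + 1 ∧
    (∀ p : ℕ, i ≤ p → p < j → π' p = - π (i + j - 1 - p)) ∧
    (∀ p : ℕ, j ≤ p → p < k → π' p = - π (j + k - 1 - p)) ∧
    (∀ p : ℕ, p < i ∨ k ≤ p → π' p = π p)

/-- Unsigned reversal `ρ(i,j)`. -/
def URev (n : ℕ) (π π' : ℕ → ℕ) : Prop :=
  ∃ i j : ℕ, 1 ≤ i ∧ i ≤ j ∧ j ≤ n ∧
    (∀ p : ℕ, i ≤ p → p ≤ j → π' p = π (i + j - p)) ∧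
    (∀ p : ℕ, p < i ∨ j < p → π' p = π p)

/-- Unsigned transposition `τ(i,j,k)`. -/
def UTransp (n : ℕ) (π π' : ℕ → ℕ) : Prop :=
  ∃ i j k : ℕ, 1 ≤ i ∧ i < j ∧ j < k ∧ k ≤ n + 1 ∧
    (∀ p : ℕ, i ≤ p → p < i + (k - j) → π' p = π (p + (j - i))) ∧
    (∀ p : ℕ, i + (k - j) ≤ p → p < k → π' p = π (p - (k - j))) ∧
    (∀ p : ℕ, p < i ∨ k ≤ p → π' p = π p)

/-- Unsigned inverse transposition (type 1 or type 2). -/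
def UInvTransp (n : ℕ) (π π' : ℕ → ℕ) : Prop :=
  ∃ i j k : ℕ, 1 ≤ i ∧ i < j ∧ j < k ∧ k ≤ n + 1 ∧
    (((∀ p : ℕ, i ≤ p → p < i + (k - j) → π' p = π (p + (j - i))) ∧
      (∀ p : ℕ, i + (k - j) ≤ p → p < k → π' p = π (i + k - 1 - p))) ∨
     ((∀ p : ℕ, i ≤ p → p < i + (k - j) → π' p = π (i + k - 1 - p)) ∧
      (∀ p : ℕ, i + (k - j) ≤ p → p < k → π' p = π (p - (k - j))))) ∧
    (∀ p : ℕ, p < i ∨ k ≤ p → π' p = π p)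

/-- Unsigned revrev `ρρ(i,j,k)`. -/
def URevRev (n : ℕ) (π π' : ℕ → ℕ) : Prop :=
  ∃ i j k : ℕ, 1 ≤ i ∧ i < j ∧ j < k ∧ k ≤ n + 1 ∧
    (∀ p : ℕ, i ≤ p → p < j → π' p = π (i + j - 1 - p)) ∧
    (∀ p : ℕ, j ≤ p → p < k → π' p = π (j + k - 1 - p)) ∧
    (∀ p : ℕ, p < i ∨ k ≤ p → π' p = π p)

def sOpRel (n : ℕ) : RearrOp → (ℕ → ℤ) → (ℕ → ℤ) → Prop
  | RearrOp.rev => SRev n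
  | RearrOp.transp => STransp n
  | RearrOp.invtransp => SInvTransp n
  | RearrOp.revrev => SRevRev n

def uOpRel (n : ℕ) : RearrOp → (ℕ → ℕ) → (ℕ → ℕ) → Prop
  | RearrOp.rev => URev n
  | RearrOp.transp => UTransp n
  | RearrOp.invtransp => UInvTransp n
  | RearrOp.revrev => URevRev n

/-- The list of operations `l` transforms the signed permutation `π` into the identity. -/
def SSorts (n : ℕ) : List RearrOp → (ℕ → ℤ) → Prop
  | [], π => ∀ p : ℕ, p ≤ n + 1 → π p = (p : ℤ)
  | op :: l, π => ∃ π' : ℕ → ℤ, sOpRel n op π π' ∧ SSorts n l π'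

/-- The list of operations `l` transforms the unsigned permutation `π` into the identity. -/
def USorts (n : ℕ) : List RearrOp → (ℕ → ℕ) → Prop
  | [], π => ∀ p : ℕ, p ≤ n + 1 → π p = p
  | op :: l, π => ∃ π' : ℕ → ℕ, uOpRel n op π π' ∧ USorts n l π'

/-- A sequence of `s` (unsigned) transpositions transforms `π` into the identity. -/
def UTranspSorts (n : ℕ) : ℕ → (ℕ → ℕ) → Prop
  | 0, π => ∀ p : ℕ, p ≤ n + 1 → π p = p
  | s + 1, π => ∃ π' : ℕ → ℕ, UTransp n π π' ∧ UTranspSorts n s π'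

/-- The cost of an operation: `wr` for a reversal, `wt` for a transposition,
inverse transposition or revrev. -/
noncomputable def opCost (wr wt : ℝ) (op : RearrOp) : ENNReal :=
  if op = RearrOp.rev then ENNReal.ofReal wr else ENNReal.ofReal wt

/-- The total cost of a sequence of operations. -/
noncomputable def seqCost (wr wt : ℝ) (l : List RearrOp) : ENNReal :=
  (l.map (opCost wr wt)).sum

/-- The weighted distance `d^w_M(π)` for a signed permutation `π`: the minimum total cost
of a sequence of operations from the model `M` transforming `π` into the identity
(`∞` if no such sequence exists). -/
noncomputable def sWDist (n : ℕ) (M : Set RearrOp) (wr wt : ℝ) (π : ℕ → ℤ) : ENNReal :=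
  sInf {c : ENNReal |
    ∃ l : List RearrOp, (∀ op ∈ l, op ∈ M) ∧ SSorts n l π ∧ c = seqCost wr wt l}

/-- The weighted distance `d^w_M(π)` for an unsigned permutation `π`. -/
noncomputable def uWDist (n : ℕ) (M : Set RearrOp) (wr wt : ℝ) (π : ℕ → ℕ) : ENNReal :=
  sInf {c : ENNReal |
    ∃ l : List RearrOp, (∀ op ∈ l, op ∈ M) ∧ USorts n l π ∧ c = seqCost wr wt l}

/-- `b(π)`: number of (signed) breakpoints of the signed permutation `π`. -/
def bS (n : ℕ) (π : ℕ → ℤ) : ℕ :=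
  ((Finset.range (n + 1)).filter (fun i => π (i + 1) - π i ≠ 1)).card

/-- `b(π)`: number of unsigned-reversal breakpoints, i.e. pairs with `|π_{i+1} − π_i| ≠ 1`. -/
def bU (n : ℕ) (π : ℕ → ℕ) : ℕ :=
  ((Finset.range (n + 1)).filter
    (fun i => ¬ (π (i + 1) = π i + 1 ∨ π i = π (i + 1) + 1))).card

/-- `b_τ(π)`: number of transposition breakpoints, i.e. pairs with `π_{i+1} − π_i ≠ 1`. -/
def bTU (n : ℕ) (π : ℕ → ℕ) : ℕ :=
  ((Finset.range (n + 1)).filter (fun i => π (i + 1) ≠ π i + 1)).card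

def M1 : Set RearrOp := {RearrOp.transp, RearrOp.invtransp}
def M2 : Set RearrOp := {RearrOp.rev, RearrOp.transp, RearrOp.invtransp}
def M3 : Set RearrOp := {RearrOp.transp, RearrOp.revrev}
def M4 : Set RearrOp := {RearrOp.rev, RearrOp.transp, RearrOp.revrev}
def M5 : Set RearrOp := {RearrOp.transp, RearrOp.invtransp, RearrOp.revrev}
def M6 : Set RearrOp := {RearrOp.rev, RearrOp.transp, RearrOp.invtransp, RearrOp.revrev}

/-!
Doubling `π` turns each transposition breakpoint `(π_m, π_{m+1})` into the unsigned breakpoint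
`(2π_m, 2π_{m+1} - 1)` at position `2m` and creates no other breakpoint, so `b(π') = b_τ(π)`.
An operation changes adjacencies only at its cuts, so a reversal removes at most two breakpoints
and every other operation at most three; with `2 w_τ ≤ 3 w_ρ` this gives
`w_τ · b(σ) ≤ 3 · cost` for every sorting sequence of any `σ`. A sequence of cost below
`w_τ (b_τ(π) + 1) / 3` must therefore remove the maximum at every step. On a doubled
permutation, a cut inside a pair `(2m - 1, 2m)` removes nothing, and a reversal, inverse
transposition or revrev whose cuts all lie between pairs makes two even entries adjacent, which
is a new breakpoint. So each step is a transposition cutting between pairs, i.e. the doubling of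
a transposition of `π`; conversely transpositions of `π` lift in this way to `π'`.
-/

open Set

def uBreakpoints (N : ℕ) (σ : ℕ → ℕ) : Finset ℕ :=
  (Finset.range (N + 1)).filter (fun i => ¬ (σ (i + 1) = σ i + 1 ∨ σ i = σ (i + 1) + 1))

lemma mem_uBreakpoints {N p : ℕ} {σ : ℕ → ℕ} :
    p ∈ uBreakpoints N σ ↔ p ≤ N ∧ ¬ (σ (p + 1) = σ p + 1 ∨ σ p = σ (p + 1) + 1) := by
  simp [uBreakpoints]

lemma uBreakpoints_eq_empty {N : ℕ} {σ : ℕ → ℕ} (hσ : ∀ p ≤ N + 1, σ p = p) :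
    uBreakpoints N σ = ∅ := by
  refine Finset.eq_empty_of_forall_notMem fun p hp => ?_
  rw [mem_uBreakpoints, hσ p (by omega), hσ (p + 1) (by omega)] at hp
  omega

lemma card_uBreakpoints_add_card_inter_le {N : ℕ} {σ σ₁ f : ℕ → ℕ} (hf : ∀ p, σ₁ p = σ (f p))
    {C C' : Finset ℕ} (h : ℕ → ℕ)
    -- `h p` is where the two entries adjacent at `p` are adjacent again
    (hcarry : ∀ p ≤ N, p ∉ C → h p ≤ N ∧ h p ∉ C' ∧
      (f (h p) = p ∧ f (h p + 1) = p + 1 ∨ f (h p) = p + 1 ∧ f (h p + 1) = p))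
    (hinj : ∀ p ≤ N, p ∉ C → ∀ p' ≤ N, p' ∉ C → h p = h p' → p = p') :
    (uBreakpoints N σ).card + (uBreakpoints N σ₁ ∩ C').card ≤
      (uBreakpoints N σ₁).card + (uBreakpoints N σ ∩ C).card := by
  have hcard : (uBreakpoints N σ \ C).card ≤ (uBreakpoints N σ₁ \ C').card := by
    refine Finset.card_le_card_of_injOn h (fun p hp => ?_) (fun p hp p' hp' => ?_)
    · simp only [Finset.coe_sdiff, Set.mem_sdiff, Finset.mem_coe, mem_uBreakpoints] at hp ⊢
      obtain ⟨hN, hC', hadj⟩ := hcarry p hp.1.1 hp.2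
      refine ⟨⟨hN, ?_⟩, hC'⟩
      rw [hf, hf]
      rcases hadj with ⟨h1, h2⟩ | ⟨h1, h2⟩ <;> rw [h1, h2] <;> tauto
    · simp only [Finset.coe_sdiff, Set.mem_sdiff, Finset.mem_coe, mem_uBreakpoints] at hp hp'
      exact hinj p hp.1.1 hp.2 p' hp'.1.1 hp'.2
  have := Finset.card_sdiff_add_card_inter (uBreakpoints N σ) C
  have := Finset.card_sdiff_add_card_inter (uBreakpoints N σ₁) C'
  omega

-- Position maps: each operation below replaces `σ` by `σ ∘ f` for the corresponding `f`.

def revMap (i j p : ℕ) : ℕ := if i ≤ p ∧ p ≤ j then i + j - p else p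

def transpMap (i j k p : ℕ) : ℕ :=
  if i ≤ p ∧ p < i + (k - j) then p + (j - i)
  else if i + (k - j) ≤ p ∧ p < k then p - (k - j) else p

def invTranspMap₁ (i j k p : ℕ) : ℕ :=
  if i ≤ p ∧ p < i + (k - j) then p + (j - i)
  else if i + (k - j) ≤ p ∧ p < k then i + k - 1 - p else p

def invTranspMap₂ (i j k p : ℕ) : ℕ :=
  if i ≤ p ∧ p < i + (k - j) then i + k - 1 - p
  else if i + (k - j) ≤ p ∧ p < k then p - (k - j) else p

def revRevMap (i j k p : ℕ) : ℕ :=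
  if i ≤ p ∧ p < j then i + j - 1 - p else if j ≤ p ∧ p < k then j + k - 1 - p else p

/-- `σ₁` arises from `σ` by cutting at the (at most `w`) adjacencies in `C`; the new adjacency
at `q` joins two entries that stood at cut positions `a` and `b`. -/
def IsCutStep (N w : ℕ) (σ σ₁ : ℕ → ℕ) : Prop :=
  ∃ C : Finset ℕ, C.card ≤ w ∧ ∃ q ≤ N, ∃ a ∈ C, ∃ b ∈ C, a ≤ N ∧ b ≤ N ∧
    σ₁ q = σ a ∧ σ₁ (q + 1) = σ b ∧
    (uBreakpoints N σ).card + (uBreakpoints N σ₁ ∩ {q}).card ≤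
      (uBreakpoints N σ₁).card + (uBreakpoints N σ ∩ C).card

section Operations

variable {N : ℕ} {σ σ₁ : ℕ → ℕ}

lemma URev.isCutStep (h : URev N σ σ₁) : IsCutStep N 2 σ σ₁ := by
  obtain ⟨i, j, hi, hij, hj, hin, hout⟩ := h
  have hf : ∀ p, σ₁ p = σ (revMap i j p) := fun p => by
    unfold revMap; split_ifs with hp
    exacts [hin p hp.1 hp.2, hout p (by omega)]
  refine ⟨{i - 1, j}, Finset.card_le_two, i - 1, by omega, i - 1, by simp, j, by simp, by omega,
    hj, ?_, ?_, card_uBreakpoints_add_card_inter_le hf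
      (fun p => if i ≤ p ∧ p < j then i + j - 1 - p else p) ?_ ?_⟩
  · rw [hf, revMap, if_neg (by omega)]
  · rw [hf, revMap, if_pos (by omega)]; congr 1; omega
  · intro p hp hpC
    simp only [Finset.mem_insert, Finset.mem_singleton] at hpC ⊢
    unfold revMap; split_ifs <;> omega
  · intro p hp hpC p' hp' hpC'
    simp only [Finset.mem_insert, Finset.mem_singleton] at hpC hpC'
    split_ifs <;> omega

lemma UInvTransp.isCutStep (h : UInvTransp N σ σ₁) : IsCutStep N 3 σ σ₁ := by
  obtain ⟨i, j, k, hi, hij, hjk, hk, hmid | hmid, hout⟩ := h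
  · obtain ⟨hA, hB⟩ := hmid
    have hf : ∀ p, σ₁ p = σ (invTranspMap₁ i j k p) := fun p => by
      unfold invTranspMap₁; split_ifs with h1 h2
      exacts [hA p h1.1 h1.2, hB p h2.1 h2.2, hout p (by omega)]
    refine ⟨{i - 1, j - 1, k - 1}, Finset.card_le_three, i + (k - j) - 1, by omega,
      k - 1, by simp, j - 1, by simp, by omega, by omega, ?_, ?_,
      card_uBreakpoints_add_card_inter_le hf (fun p => if i ≤ p ∧ p + 2 ≤ j then i + k - 2 - p
        else if j ≤ p ∧ p + 2 ≤ k then p - (j - i) else p) ?_ ?_⟩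
    · rw [hf, invTranspMap₁, if_pos (by omega)]; congr 1; omega
    · rw [hf, invTranspMap₁, if_neg (by omega), if_pos (by omega)]; congr 1; omega
    · intro p hp hpC
      simp only [Finset.mem_insert, Finset.mem_singleton] at hpC ⊢
      unfold invTranspMap₁; split_ifs <;> omega
    · intro p hp hpC p' hp' hpC'
      simp only [Finset.mem_insert, Finset.mem_singleton] at hpC hpC'
      split_ifs <;> omega
  · obtain ⟨hA, hB⟩ := hmid
    have hf : ∀ p, σ₁ p = σ (invTranspMap₂ i j k p) := fun p => by
      unfold invTranspMap₂; split_ifs with h1 h2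
      exacts [hA p h1.1 h1.2, hB p h2.1 h2.2, hout p (by omega)]
    refine ⟨{i - 1, j - 1, k - 1}, Finset.card_le_three, i - 1, by omega,
      i - 1, by simp, k - 1, by simp, by omega, by omega, ?_, ?_,
      card_uBreakpoints_add_card_inter_le hf (fun p => if i ≤ p ∧ p + 2 ≤ j then p + (k - j)
        else if j ≤ p ∧ p + 2 ≤ k then i + k - 2 - p else p) ?_ ?_⟩
    · rw [hf, invTranspMap₂, if_neg (by omega), if_neg (by omega)]
    · rw [hf, invTranspMap₂, if_pos (by omega)]; congr 1; omega
    · intro p hp hpC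
      simp only [Finset.mem_insert, Finset.mem_singleton] at hpC ⊢
      unfold invTranspMap₂; split_ifs <;> omega
    · intro p hp hpC p' hp' hpC'
      simp only [Finset.mem_insert, Finset.mem_singleton] at hpC hpC'
      split_ifs <;> omega

lemma URevRev.isCutStep (h : URevRev N σ σ₁) : IsCutStep N 3 σ σ₁ := by
  obtain ⟨i, j, k, hi, hij, hjk, hk, hA, hB, hout⟩ := h
  have hf : ∀ p, σ₁ p = σ (revRevMap i j k p) := fun p => by
    unfold revRevMap; split_ifs with h1 h2
    exacts [hA p h1.1 h1.2, hB p h2.1 h2.2, hout p (by omega)]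
  refine ⟨{i - 1, j - 1, k - 1}, Finset.card_le_three, i - 1, by omega,
    i - 1, by simp, j - 1, by simp, by omega, by omega, ?_, ?_,
    card_uBreakpoints_add_card_inter_le hf (fun p => if i ≤ p ∧ p + 2 ≤ j then i + j - 2 - p
      else if j ≤ p ∧ p + 2 ≤ k then j + k - 2 - p else p) ?_ ?_⟩
  · rw [hf, revRevMap, if_neg (by omega), if_neg (by omega)]
  · rw [hf, revRevMap, if_pos (by omega)]; congr 1; omega
  · intro p hp hpC
    simp only [Finset.mem_insert, Finset.mem_singleton] at hpC ⊢
    unfold revRevMap; split_ifs <;> omega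
  · intro p hp hpC p' hp' hpC'
    simp only [Finset.mem_insert, Finset.mem_singleton] at hpC hpC'
    split_ifs <;> omega

lemma uTransp_iff : UTransp N σ σ₁ ↔ ∃ i j k, 1 ≤ i ∧ i < j ∧ j < k ∧ k ≤ N + 1 ∧
    ∀ p, σ₁ p = σ (transpMap i j k p) := by
  constructor
  · rintro ⟨i, j, k, hi, hij, hjk, hk, hA, hB, hout⟩
    refine ⟨i, j, k, hi, hij, hjk, hk, fun p => ?_⟩
    unfold transpMap; split_ifs with h1 h2
    exacts [hA p h1.1 h1.2, hB p h2.1 h2.2, hout p (by omega)]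
  · rintro ⟨i, j, k, hi, hij, hjk, hk, hf⟩
    refine ⟨i, j, k, hi, hij, hjk, hk, fun p h1 h2 => ?_, fun p h1 h2 => ?_, fun p hp => ?_⟩
    · rw [hf, transpMap, if_pos ⟨h1, h2⟩]
    · rw [hf, transpMap, if_neg (by omega), if_pos ⟨h1, h2⟩]
    · rw [hf, transpMap, if_neg (by omega), if_neg (by omega)]

lemma card_uBreakpoints_le_of_transpMap {i j k : ℕ} (hi : 1 ≤ i) (hij : i < j) (hjk : j < k)
    (hk : k ≤ N + 1) (hf : ∀ p, σ₁ p = σ (transpMap i j k p)) :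
    (uBreakpoints N σ).card ≤
      (uBreakpoints N σ₁).card + (uBreakpoints N σ ∩ {i - 1, j - 1, k - 1}).card := by
  have := card_uBreakpoints_add_card_inter_le (N := N) (C := {i - 1, j - 1, k - 1}) (C' := ∅) hf
    (fun p => if i ≤ p ∧ p + 2 ≤ j then p + (k - j)
      else if j ≤ p ∧ p + 2 ≤ k then p - (j - i) else p) ?_ ?_
  · simpa using this
  · intro p hp hpC
    simp only [Finset.mem_insert, Finset.mem_singleton, Finset.notMem_empty, not_false_eq_true,
      true_and] at hpC ⊢
    unfold transpMap; split_ifs <;> omega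
  · intro p hp hpC p' hp' hpC'
    simp only [Finset.mem_insert, Finset.mem_singleton] at hpC hpC'
    split_ifs <;> omega

lemma IsCutStep.card_le {w : ℕ} (h : IsCutStep N w σ σ₁) :
    (uBreakpoints N σ).card ≤ (uBreakpoints N σ₁).card + w := by
  obtain ⟨C, hC, q, -, a, -, b, -, -, -, -, -, hbal⟩ := h
  have := Finset.card_le_card (Finset.inter_subset_right (s₁ := uBreakpoints N σ) (s₂ := C))
  omega

def opWeight : RearrOp → ℕ
  | RearrOp.rev => 2
  | _ => 3

def seqWeight (l : List RearrOp) : ℕ := (l.map opWeight).sum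

lemma card_uBreakpoints_le_of_uOpRel {op : RearrOp} (h : uOpRel N op σ σ₁) :
    (uBreakpoints N σ).card ≤ (uBreakpoints N σ₁).card + opWeight op := by
  cases op with
  | rev => exact URev.isCutStep h |>.card_le
  | invtransp => exact UInvTransp.isCutStep h |>.card_le
  | revrev => exact URevRev.isCutStep h |>.card_le
  | transp =>
    obtain ⟨i, j, k, hi, hij, hjk, hk, hf⟩ := uTransp_iff.1 h
    have := card_uBreakpoints_le_of_transpMap hi hij hjk hk hf
    have : (uBreakpoints N σ ∩ {i - 1, j - 1, k - 1}).card ≤ 3 :=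
      (Finset.card_le_card Finset.inter_subset_right).trans Finset.card_le_three
    simp only [opWeight]
    omega

lemma card_uBreakpoints_le_seqWeight :
    ∀ {l : List RearrOp} {σ : ℕ → ℕ}, USorts N l σ → (uBreakpoints N σ).card ≤ seqWeight l
  | [], σ, h => by simp [uBreakpoints_eq_empty h]
  | op :: l, σ, ⟨σ₁, hop, hl⟩ => by
    have hstep := card_uBreakpoints_le_of_uOpRel hop
    have hrest := card_uBreakpoints_le_seqWeight hl
    simp only [seqWeight, List.map_cons, List.sum_cons] at hrest ⊢
    omega

end Operations

def doubling (π : ℕ → ℕ) (p : ℕ) : ℕ := 2 * π ((p + 1) / 2) - p % 2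

section Doubling

variable {n : ℕ} {π σ σ₁ : ℕ → ℕ}

lemma IsUPerm.one_le_apply_succ (hπ : IsUPerm n π) {m : ℕ} (hm : m ≤ n) : 1 ≤ π (m + 1) := by
  rcases hm.eq_or_lt with rfl | hm
  · rw [hπ.2.1]; omega
  · exact (hπ.2.2.1 (m + 1) (by omega) (by omega)).1

lemma IsUPerm.apply_ne_apply_succ (hπ : IsUPerm n π) {m : ℕ} (hm : m ≤ n) : π m ≠ π (m + 1) := by
  intro heq
  rcases m.eq_zero_or_pos with rfl | hm0
  · have := hπ.one_le_apply_succ hm; rw [hπ.1] at heq; omega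
  rcases hm.eq_or_lt with rfl | hmn
  · have := (hπ.2.2.1 m hm0 le_rfl).2; rw [hπ.2.1] at heq; omega
  · have := hπ.2.2.2 m (m + 1) hm0 hmn.le (by omega) (by omega) heq; omega

lemma IsUPerm.comp_transpMap (hπ : IsUPerm n π) {a b c : ℕ} (ha : 1 ≤ a) (hab : a < b)
    (hbc : b < c) (hc : c ≤ n + 1) : IsUPerm n (π ∘ transpMap a b c) := by
  have hfix : ∀ p, p < a ∨ c ≤ p → transpMap a b c p = p := fun p hp => by
    rw [transpMap, if_neg (by omega), if_neg (by omega)]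
  have hrange : ∀ p, 1 ≤ p → p ≤ n → 1 ≤ transpMap a b c p ∧ transpMap a b c p ≤ n :=
    fun p _ _ => by unfold transpMap; split_ifs <;> omega
  refine ⟨?_, ?_, fun p h1 h2 => ?_, fun p q hp1 hp2 hq1 hq2 heq => ?_⟩
  · simp only [Function.comp_apply, hfix 0 (by omega), hπ.1]
  · simp only [Function.comp_apply, hfix (n + 1) (by omega), hπ.2.1]
  · exact hπ.2.2.1 _ (hrange p h1 h2).1 (hrange p h1 h2).2
  · have := hπ.2.2.2 _ _ (hrange p hp1 hp2).1 (hrange p hp1 hp2).2 (hrange q hq1 hq2).1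
      (hrange q hq1 hq2).2 heq
    unfold transpMap at this; split_ifs at this <;> omega

lemma eqOn_doubling (hπ : IsUPerm n π) {π' : ℕ → ℕ} (h0 : π' 0 = 0)
    (hlast : π' (2 * n + 1) = 2 * n + 1)
    (hdef : ∀ i, 1 ≤ i → i ≤ n → π' (2 * i - 1) = 2 * π i - 1 ∧ π' (2 * i) = 2 * π i) :
    EqOn π' (doubling π) (Iic (2 * n + 1)) := by
  intro p hp
  rw [mem_Iic] at hp
  obtain ⟨m, rfl | rfl⟩ := Nat.even_or_odd' p
  · rcases m.eq_zero_or_pos with rfl | hm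
    · simp [doubling, hπ.1, h0]
    · rw [(hdef m hm (by omega)).2, doubling, show (2 * m + 1) / 2 = m by omega]; omega
  · rcases (show m ≤ n by omega).eq_or_lt with rfl | hm
    · rw [hlast, doubling, show (2 * m + 1 + 1) / 2 = m + 1 by omega, hπ.2.1]; omega
    · rw [show 2 * m + 1 = 2 * (m + 1) - 1 by omega, (hdef (m + 1) (by omega) (by omega)).1,
        doubling, show (2 * (m + 1) - 1 + 1) / 2 = m + 1 by omega]
      omega

variable (hπ : IsUPerm n π) (hσ : EqOn σ (doubling π) (Iic (2 * n + 1)))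
include hπ hσ

lemma notMem_uBreakpoints_doubling_of_odd {c : ℕ} (hc : c % 2 = 1) :
    c ∉ uBreakpoints (2 * n) σ := by
  rw [mem_uBreakpoints]
  rintro ⟨hcn, hadj⟩
  have h1 : σ c = 2 * π ((c + 1) / 2) - 1 := by
    rw [hσ (show c ≤ 2 * n + 1 by omega), doubling, hc]
  have h2 : σ (c + 1) = 2 * π ((c + 1) / 2) := by
    rw [hσ (show c + 1 ≤ 2 * n + 1 by omega), doubling, show (c + 1 + 1) / 2 = (c + 1) / 2 by omega,
      show (c + 1) % 2 = 0 by omega]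
    rfl
  have := (hπ.2.2.1 ((c + 1) / 2) (by omega) (by omega)).1
  omega

lemma mem_uBreakpoints_doubling_two_mul_iff {m : ℕ} :
    2 * m ∈ uBreakpoints (2 * n) σ ↔ m ≤ n ∧ π (m + 1) ≠ π m + 1 := by
  rw [mem_uBreakpoints, show 2 * m ≤ 2 * n ↔ m ≤ n by omega]
  refine and_congr_right fun hm => ?_
  rw [hσ (show 2 * m ≤ 2 * n + 1 by omega), hσ (show 2 * m + 1 ≤ 2 * n + 1 by omega), doubling,
    doubling, show (2 * m + 1) / 2 = m by omega, show (2 * m + 1 + 1) / 2 = m + 1 by omega]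
  have := hπ.one_le_apply_succ hm
  have := hπ.apply_ne_apply_succ hm
  omega

lemma card_uBreakpoints_doubling : (uBreakpoints (2 * n) σ).card = bTU n π := by
  have hset : uBreakpoints (2 * n) σ =
      ((Finset.range (n + 1)).filter fun i => π (i + 1) ≠ π i + 1).image (2 * ·) := by
    ext p
    simp only [Finset.mem_image, Finset.mem_filter, Finset.mem_range, Nat.lt_succ_iff]
    constructor
    · intro hp
      obtain ⟨m, rfl⟩ : ∃ m, p = 2 * m := ⟨p / 2, by
        by_contra h; exact notMem_uBreakpoints_doubling_of_odd hπ hσ (by omega) hp⟩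
      exact ⟨m, (mem_uBreakpoints_doubling_two_mul_iff hπ hσ).1 hp, rfl⟩
    · rintro ⟨m, hm, rfl⟩
      exact (mem_uBreakpoints_doubling_two_mul_iff hπ hσ).2 hm
  rw [hset, Finset.card_image_of_injective _ fun a b h => by simpa using h]
  rfl

lemma card_inter_uBreakpoints_doubling_lt {C : Finset ℕ} {c : ℕ} (hcC : c ∈ C) (hc : c % 2 = 1) :
    (uBreakpoints (2 * n) σ ∩ C).card < C.card :=
  Finset.card_lt_card <| (Finset.ssubset_iff_of_subset Finset.inter_subset_right).2
    ⟨c, hcC, fun h => notMem_uBreakpoints_doubling_of_odd hπ hσ hc (Finset.mem_inter.1 h).1⟩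

lemma IsCutStep.card_add_one_le_of_doubling {w : ℕ} (h : IsCutStep (2 * n) w σ σ₁) :
    (uBreakpoints (2 * n) σ).card + 1 ≤ (uBreakpoints (2 * n) σ₁).card + w := by
  obtain ⟨C, hC, q, hq, a, ha, b, hb, han, hbn, hqa, hqb, hbal⟩ := h
  by_cases hodd : ∃ c ∈ C, c % 2 = 1
  · obtain ⟨c, hcC, hc⟩ := hodd
    have := card_inter_uBreakpoints_doubling_lt hπ hσ hcC hc
    omega
  · push Not at hodd
    have heven : ∀ x ∈ C, x ≤ 2 * n → σ x % 2 = 0 := fun x hx hxn => by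
      rw [hσ (show x ≤ 2 * n + 1 by omega), doubling, show x % 2 = 0 by have := hodd x hx; omega]
      omega
    have hnew : q ∈ uBreakpoints (2 * n) σ₁ := by
      have := heven a ha han
      have := heven b hb hbn
      rw [mem_uBreakpoints, hqa, hqb]
      omega
    rw [Finset.inter_singleton_of_mem hnew, Finset.card_singleton] at hbal
    have := Finset.card_le_card (Finset.inter_subset_right (s₁ := uBreakpoints (2 * n) σ) (s₂ := C))
    omega

end Doubling

lemma transpMap_le {i j k p M : ℕ} (hij : i ≤ j) (hjk : j ≤ k) (hp : p ≤ M) (hk : k ≤ M + 1) :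
    transpMap i j k p ≤ M := by
  unfold transpMap; split_ifs <;> omega

lemma doubling_transpMap (π : ℕ → ℕ) {a b c : ℕ} (ha : 1 ≤ a) (hab : a < b) (hbc : b < c)
    (p : ℕ) :
    doubling π (transpMap (2 * a - 1) (2 * b - 1) (2 * c - 1) p) =
      doubling (π ∘ transpMap a b c) p := by
  have hpair : (transpMap (2 * a - 1) (2 * b - 1) (2 * c - 1) p + 1) / 2 =
      transpMap a b c ((p + 1) / 2) := by
    unfold transpMap; split_ifs <;> omega
  have hparity : transpMap (2 * a - 1) (2 * b - 1) (2 * c - 1) p % 2 = p % 2 := by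
    unfold transpMap; split_ifs <;> omega
  rw [doubling, doubling, hpair, hparity, Function.comp_apply]

lemma Set.EqOn.comp_transpMap_doubling {n : ℕ} {π σ : ℕ → ℕ}
    (hσ : EqOn σ (doubling π) (Iic (2 * n + 1))) {a b c : ℕ} (ha : 1 ≤ a) (hab : a < b)
    (hbc : b < c) (hc : c ≤ n + 1) :
    EqOn (σ ∘ transpMap (2 * a - 1) (2 * b - 1) (2 * c - 1)) (doubling (π ∘ transpMap a b c))
      (Iic (2 * n + 1)) := fun p hp => by
  rw [Function.comp_apply, hσ (transpMap_le (by omega) (by omega) hp (by omega)),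
    doubling_transpMap π ha hab hbc]

lemma exists_uTransp_of_uTransp_doubling {n : ℕ} {π σ σ₁ : ℕ → ℕ} (hπ : IsUPerm n π)
    (hσ : EqOn σ (doubling π) (Iic (2 * n + 1))) (hop : UTransp (2 * n) σ σ₁)
    (htight : (uBreakpoints (2 * n) σ₁).card + 3 ≤ (uBreakpoints (2 * n) σ).card) :
    ∃ π₁, UTransp n π π₁ ∧ IsUPerm n π₁ ∧ EqOn σ₁ (doubling π₁) (Iic (2 * n + 1)) := by
  obtain ⟨i, j, k, hi, hij, hjk, hk, hf⟩ := uTransp_iff.1 hop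
  have haligned : i % 2 = 1 ∧ j % 2 = 1 ∧ k % 2 = 1 := by
    by_contra hinside
    obtain ⟨x, hx, hx2⟩ : ∃ x ∈ ({i - 1, j - 1, k - 1} : Finset ℕ), x % 2 = 1 := by
      simp only [Finset.mem_insert, Finset.mem_singleton, exists_eq_or_imp, exists_eq_left]
      omega
    have := card_uBreakpoints_le_of_transpMap hi hij hjk hk hf
    have := card_inter_uBreakpoints_doubling_lt hπ hσ hx hx2
    have := Finset.card_le_three (a := i - 1) (b := j - 1) (c := k - 1)
    omega
  obtain ⟨a, rfl⟩ : ∃ a, i = 2 * a - 1 := ⟨(i + 1) / 2, by omega⟩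
  obtain ⟨b, rfl⟩ : ∃ b, j = 2 * b - 1 := ⟨(j + 1) / 2, by omega⟩
  obtain ⟨c, rfl⟩ : ∃ c, k = 2 * c - 1 := ⟨(k + 1) / 2, by omega⟩
  obtain rfl : σ₁ = σ ∘ transpMap (2 * a - 1) (2 * b - 1) (2 * c - 1) := funext hf
  exact ⟨π ∘ transpMap a b c,
    uTransp_iff.2 ⟨a, b, c, by omega, by omega, by omega, by omega, fun p => rfl⟩,
    hπ.comp_transpMap (by omega) (by omega) (by omega) (by omega),
    hσ.comp_transpMap_doubling (by omega) (by omega) (by omega) (by omega)⟩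

section Sorting

variable {n : ℕ}

lemma UTranspSorts.uSorts_doubling :
    ∀ {s : ℕ} {π σ : ℕ → ℕ}, UTranspSorts n s π → EqOn σ (doubling π) (Iic (2 * n + 1)) →
      USorts (2 * n) (List.replicate s RearrOp.transp) σ
  | 0, π, σ, hπ, hσ => fun p hp => by
    rw [hσ hp, doubling, hπ _ (by omega)]
    omega
  | s + 1, π, σ, ⟨π₁, hstep, hs⟩, hσ => by
    obtain ⟨a, b, c, ha, hab, hbc, hc, hf⟩ := uTransp_iff.1 hstep
    obtain rfl : π₁ = π ∘ transpMap a b c := funext hf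
    exact ⟨_, uTransp_iff.2 ⟨_, _, _, by omega, by omega, by omega, by omega, fun p => rfl⟩,
      uSorts_doubling hs (hσ.comp_transpMap_doubling ha hab hbc hc)⟩

theorem exists_uTranspSorts_of_uSorts_doubling :
    ∀ {l : List RearrOp} {π σ : ℕ → ℕ}, IsUPerm n π → EqOn σ (doubling π) (Iic (2 * n + 1)) →
      USorts (2 * n) l σ → seqWeight l ≤ bTU n π → ∃ s, UTranspSorts n s π ∧ 3 * s = bTU n π
  | [], π, σ, hπ, hσ, hl, _ => by
    have hid : ∀ m ≤ n + 1, π m = m := fun m hm => by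
      rcases hm.eq_or_lt with rfl | hm
      · exact hπ.2.1
      · have := hσ (show 2 * m ≤ 2 * n + 1 by omega)
        rw [hl _ (by omega), doubling, show (2 * m + 1) / 2 = m by omega] at this
        omega
    refine ⟨0, hid, ?_⟩
    rw [← card_uBreakpoints_doubling hπ hσ, uBreakpoints_eq_empty hl, Finset.card_empty]
  | op :: l, π, σ, hπ, hσ, ⟨σ₁, hop, hl⟩, hw => by
    have hb := card_uBreakpoints_doubling hπ hσ
    have hw' : opWeight op + seqWeight l ≤ bTU n π := by
      simpa only [seqWeight, List.map_cons, List.sum_cons] using hw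
    have htight : (uBreakpoints (2 * n) σ₁).card + opWeight op ≤ (uBreakpoints (2 * n) σ).card := by
      have := card_uBreakpoints_le_seqWeight hl
      omega
    cases op with
    | rev =>
      have := (URev.isCutStep hop).card_add_one_le_of_doubling hπ hσ
      simp only [opWeight] at htight; omega
    | invtransp =>
      have := (UInvTransp.isCutStep hop).card_add_one_le_of_doubling hπ hσ
      simp only [opWeight] at htight; omega
    | revrev =>
      have := (URevRev.isCutStep hop).card_add_one_le_of_doubling hπ hσ
      simp only [opWeight] at htight; omega
    | transp =>
      have hcut := card_uBreakpoints_le_of_uOpRel hop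
      simp only [opWeight] at htight hw' hcut
      obtain ⟨π₁, hstep, hπ₁, hσ₁⟩ := exists_uTransp_of_uTransp_doubling hπ hσ hop htight
      have hb₁ := card_uBreakpoints_doubling hπ₁ hσ₁
      obtain ⟨s, hs, hs3⟩ := exists_uTranspSorts_of_uSorts_doubling hπ₁ hσ₁ hl (by omega)
      exact ⟨s + 1, ⟨π₁, hstep, hs⟩, by omega⟩

end Sorting

section Cost

variable {wr wt : ℝ}

lemma ofReal_mul_opWeight_le (hw : 2 * wt ≤ 3 * wr) (op : RearrOp) :
    ENNReal.ofReal wt * opWeight op ≤ 3 * opCost wr wt op := by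
  cases op with
  | rev =>
    have := ENNReal.ofReal_le_ofReal hw
    rw [ENNReal.ofReal_mul (by norm_num), ENNReal.ofReal_mul (by norm_num)] at this
    simpa [opWeight, opCost, mul_comm] using this
  | _ => simp [opWeight, opCost, mul_comm]

lemma ofReal_mul_seqWeight_le (hwt : 0 ≤ wt) (hw : 2 * wt ≤ 3 * wr) :
    ∀ l : List RearrOp, ENNReal.ofReal wt * seqWeight l ≤ 3 * seqCost wr wt l
  | [] => by simp [seqWeight, seqCost]
  | op :: l => by
    have ih := ofReal_mul_seqWeight_le hwt hw l
    simp only [seqWeight, seqCost, List.map_cons, List.sum_cons, Nat.cast_add, mul_add] at ih ⊢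
    exact add_le_add (ofReal_mul_opWeight_le hw op) ih

lemma seqCost_replicate_transp (s : ℕ) :
    seqCost wr wt (List.replicate s RearrOp.transp) = s * ENNReal.ofReal wt := by
  simp [seqCost, opCost, List.map_replicate, List.sum_replicate]

lemma uWDist_le_seqCost {N : ℕ} {M : Set RearrOp} {σ : ℕ → ℕ} {l : List RearrOp}
    (hM : ∀ op ∈ l, op ∈ M) (hl : USorts N l σ) : uWDist N M wr wt σ ≤ seqCost wr wt l :=
  sInf_le ⟨l, hM, hl, rfl⟩

lemma ofReal_mul_le_three_mul_uWDist {N k : ℕ} {M : Set RearrOp} {σ : ℕ → ℕ} (hwt : 0 ≤ wt)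
    (hw : 2 * wt ≤ 3 * wr)
    (hk : ∀ l : List RearrOp, (∀ op ∈ l, op ∈ M) → USorts N l σ → k ≤ seqWeight l) :
    ENNReal.ofReal wt * k ≤ 3 * uWDist N M wr wt σ := by
  rw [mul_comm 3, ← ENNReal.div_le_iff_le_mul (by norm_num) (by norm_num)]
  refine le_sInf ?_
  rintro _ ⟨l, hM, hl, rfl⟩
  rw [ENNReal.div_le_iff_le_mul (by norm_num) (by norm_num), mul_comm _ (3 : ENNReal)]
  calc ENNReal.ofReal wt * k ≤ ENNReal.ofReal wt * seqWeight l := by gcongr; exact hk l hM hl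
    _ ≤ 3 * seqCost wr wt l := ofReal_mul_seqWeight_le hwt hw l

end Cost

/-- Let `π` be an unsigned permutation of size `n` with `b_τ(π)`
transposition breakpoints, let `π'` be the unsigned permutation of size `2n` defined by
`π'_{2i−1} = 2π_i − 1` and `π'_{2i} = 2π_i` for `1 ≤ i ≤ n`, and let `w_ρ, w_τ` be
positive weights with `w_τ/w_ρ ≤ 3/2`. Then there exists a sequence `S` of transpositions
transforming `π` into the identity with `3·|S| = b_τ(π)` if and only if
`3·d^w_{M6}(π') ≤ w_τ · b_τ(π)`, where `M6` acts on unsigned permutations of size `2n`. -/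
theorem transposition_sorting_iff_weighted_unsigned_distance
    (n : ℕ) (π : ℕ → ℕ) (hπ : IsUPerm n π)
    (π' : ℕ → ℕ) (hπ' : IsUPerm (2 * n) π')
    (hdef : ∀ i : ℕ, 1 ≤ i → i ≤ n →
      π' (2 * i - 1) = 2 * π i - 1 ∧ π' (2 * i) = 2 * π i)
    (wr wt : ℝ) (hwr : 0 < wr) (hwt : 0 < wt) (hratio : wt / wr ≤ 3 / 2) :
    (∃ s : ℕ, UTranspSorts n s π ∧ 3 * s = bTU n π) ↔
      3 * uWDist (2 * n) M6 wr wt π' ≤ ENNReal.ofReal (wt * (bTU n π : ℝ)) := by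
  have hσ := eqOn_doubling hπ hπ'.1 hπ'.2.1 hdef
  have hw : 2 * wt ≤ 3 * wr := by rw [div_le_iff₀ hwr] at hratio; linarith
  constructor
  · rintro ⟨s, hs, hs3⟩
    calc 3 * uWDist (2 * n) M6 wr wt π'
        ≤ 3 * seqCost wr wt (List.replicate s RearrOp.transp) := by
          gcongr
          exact uWDist_le_seqCost (fun op _ => by cases op <;> simp [M6]) (hs.uSorts_doubling hσ)
      _ = ENNReal.ofReal (wt * (bTU n π : ℝ)) := by
          rw [seqCost_replicate_transp, ← hs3, ENNReal.ofReal_mul hwt.le, ENNReal.ofReal_natCast]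
          push_cast
          ring
  · intro h
    by_contra hne
    have hk : ∀ l : List RearrOp, (∀ op ∈ l, op ∈ M6) → USorts (2 * n) l π' →
        bTU n π + 1 ≤ seqWeight l := fun l _ hl => by
      by_contra hlt
      exact hne (exists_uTranspSorts_of_uSorts_doubling hπ hσ hl (by omega))
    have := (ofReal_mul_le_three_mul_uWDist hwt.le hw hk).trans h
    rw [ENNReal.ofReal_mul hwt.le, ENNReal.ofReal_natCast,
      ENNReal.mul_le_mul_iff_right (by simpa using hwt) ENNReal.ofReal_ne_top, Nat.cast_le] at this
    omega
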